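/- Let Π be a set of congruence classes and assume M is Π-closed for a ground term α with α ∈ M. Let A ∈ Π be a class all of whose constrained terms carry the same constraint, with separating variables X and free variables Y, and assume gnd_M(E) ⊨ sσ ≈ tσ for all substitutions σ grounding for A and all {sσ, tσ} ⊆ Aσ. Then for every Γ ∥ s ∈ A, every substitution σ : X → T(Ω,∅), every substitution δ : Y → T(Ω,∅) such that Γσδ is satisfiable, and δ' = {y ↦ α | y ∈ Y}, it holds that gnd_M(E) ⊨ sσδ ≈ sσδ'. -/

import Mathlib

namespace NGCC

inductive Tm (F : Type) : Type
  | var : ℕ → Tm F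
  | app : F → List (Tm F) → Tm F

instance {F : Type} : Inhabited (Tm F) := ⟨Tm.var 0⟩

namespace Tm
variable {F : Type}

def subst (σ : ℕ → Tm F) : Tm F → Tm F
  | var x => σ x
  | app f ts => app f (ts.attach.map fun t => t.1.subst σ)
  decreasing_by simp only [app.sizeOf_spec]; have h := List.sizeOf_lt_of_mem t.2; omega

def varsList : Tm F → List ℕ
  | var x => [x]
  | app _ ts => (ts.attach.map fun t => t.1.varsList).flatten
  decreasing_by simp only [app.sizeOf_spec]; have h := List.sizeOf_lt_of_mem t.2; omega

def varsIn (t : Tm F) : Set ℕ := {x | x ∈ t.varsList}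

def Ground (t : Tm F) : Prop := t.varsList = []

def size : Tm F → ℕ
  | var _ => 1
  | app _ ts => 1 + (ts.attach.map fun t => t.1.size).sum
  decreasing_by simp only [app.sizeOf_spec]; have h := List.sizeOf_lt_of_mem t.2; omega

def count (x : ℕ) : Tm F → ℕ
  | var y => if y = x then 1 else 0
  | app _ ts => (ts.attach.map fun t => count x t.1).sum
  decreasing_by simp only [app.sizeOf_spec]; have h := List.sizeOf_lt_of_mem t.2; omega

def eval {α : Type} (I : F → List α → α) (v : ℕ → α) : Tm F → α
  | var x => v x
  | app f ts => I f (ts.attach.map fun t => t.1.eval I v)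
  decreasing_by simp only [app.sizeOf_spec]; have h := List.sizeOf_lt_of_mem t.2; omega

end Tm


abbrev Subst (F : Type) := ℕ → Tm F

def Subst.dom {F : Type} (σ : Subst F) : Set ℕ := {x | σ x ≠ Tm.var x}

def Subst.comp {F : Type} (σ δ : Subst F) : Subst F := fun x => (σ x).subst δ

structure CTerm (F : Type) where
  constr : Set (Tm F)
  term : Tm F

abbrev CClass (F : Type) := Set (CTerm F)

variable {F : Type}

/-- Application of a substitution to a constraint (set of atoms `u ∈ M`). -/
def substConstr (Γ : Set (Tm F)) (σ : Subst F) : Set (Tm F) := (fun u => u.subst σ) '' Γ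

def CTerm.subst (ct : CTerm F) (σ : Subst F) : CTerm F :=
  ⟨substConstr ct.constr σ, ct.term.subst σ⟩

def substClass (A : CClass F) (σ : Subst F) : CClass F := (fun ct => ct.subst σ) '' A

/-- `Γσ` is true: every atom of `Γσ` belongs to `M`. -/
def ConstrHolds (M : Set (Tm F)) (Γ : Set (Tm F)) (σ : Subst F) : Prop :=
  substConstr Γ σ ⊆ M

/-- Satisfiability of a constraint with respect to `M`. -/
def ConstrSat (M : Set (Tm F)) (Γ : Set (Tm F)) : Prop :=
  ∃ σ : Subst F, ConstrHolds M Γ σ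

/-- `σ` is grounding for the class `A` (for all its constrained terms). -/
def GroundingForClass (σ : Subst F) (A : CClass F) : Prop :=
  ∀ ct ∈ A, (ct.term.subst σ).Ground ∧ ∀ u ∈ ct.constr, (u.subst σ).Ground

/-- Separating variables of a class. -/
def sepVars (A : CClass F) : Set ℕ := ⋂ ct ∈ A, (CTerm.term ct).varsIn

/-- All variables of the terms of a class. -/
def termVars (A : CClass F) : Set ℕ := ⋃ ct ∈ A, (CTerm.term ct).varsIn

/-- Free variables of a class. -/
def freeVars (A : CClass F) : Set ℕ := termVars A \ sepVars A

/-- All variables occurring in a class (terms and constraints). -/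
def varsAll (A : CClass F) : Set ℕ :=
  ⋃ ct ∈ A, ((CTerm.term ct).varsIn ∪ ⋃ u ∈ CTerm.constr ct, u.varsIn)

/-- `gnd'(A)`. -/
def gnd' (M : Set (Tm F)) (A : CClass F) : Set (CClass F) :=
  { B | ∃ σ : Subst F, Subst.dom σ = sepVars A ∧ (∀ x ∈ Subst.dom σ, (σ x).Ground) ∧
      B = { ct' | ∃ ct ∈ A, ConstrSat M (substConstr (CTerm.constr ct) σ) ∧ ct' = ct.subst σ } }

/-- `gnd(A)`: sets of ground terms. -/
def gnd (M : Set (Tm F)) (A : CClass F) : Set (Set (Tm F)) :=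
  { S | ∃ B ∈ gnd' M A,
      S = { t | ∃ σ : Subst F, GroundingForClass σ B ∧
              ∃ ct ∈ B, ConstrHolds M (CTerm.constr ct) σ ∧ t = (CTerm.term ct).subst σ } }

/-- The elements of `gnd(A)` regarded as classes of constrained ground terms. -/
def gndCl (M : Set (Tm F)) (A : CClass F) : Set (CClass F) :=
  { S | ∃ B ∈ gnd' M A,
      S = { ct' | ∃ σ : Subst F, GroundingForClass σ B ∧
              ∃ ct ∈ B, ConstrHolds M (CTerm.constr ct) σ ∧ ct' = ct.subst σ } }

/-- `B` subsumes `A`. -/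
def Subsumes (M : Set (Tm F)) (B A : CClass F) : Prop :=
  ∀ A' ∈ gnd M A, ∃ B' ∈ gnd M B, A' ⊆ B'

/-- `A` is `M`-constrained: the atom `sᵢ ∈ M` occurs in `Γᵢ` for each `Γᵢ ∥ sᵢ ∈ A`. -/
def MConstrained (A : CClass F) : Prop := ∀ ct ∈ A, CTerm.term ct ∈ CTerm.constr ct

/-- `ρ` is a renaming of the free variables of `A` to fresh variables. -/
def IsNormRenaming (A : CClass F) (ρ : Subst F) : Prop :=
  (∀ x, ∃ y, ρ x = Tm.var y) ∧ (∀ x, x ∉ freeVars A → ρ x = Tm.var x) ∧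
  (∀ x ∈ freeVars A, ∀ x' ∈ freeVars A, ρ x = ρ x' → x = x') ∧
  (∀ x ∈ freeVars A, ∀ y, ρ x = Tm.var y → y ∉ varsAll A)

/-- The normal class `norm(A)` for the renaming `ρ`. -/
def normC (A : CClass F) (ρ : Subst F) : CClass F :=
  { ct' | ∃ ct ∈ A, ct' = ⟨CTerm.constr ct ∪ substConstr (CTerm.constr ct) ρ, CTerm.term ct⟩ } ∪
  { ct' | ∃ ct ∈ A, ((CTerm.term ct).varsIn ∩ freeVars A).Nonempty ∧
      ct' = ⟨CTerm.constr ct ∪ substConstr (CTerm.constr ct) ρ, (CTerm.term ct).subst ρ⟩ }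

/-- `Aμ` for a grounding substitution `μ`: the set of ground terms
`{sμ | Γ ∥ s ∈ A and Γμ true}`. -/
def applyClass (M : Set (Tm F)) (A : CClass F) (μ : Subst F) : Set (Tm F) :=
  { t | ∃ ct ∈ A, ConstrHolds M (CTerm.constr ct) μ ∧ t = (CTerm.term ct).subst μ }

/-- Subterm relation. -/
inductive Subterm {F : Type} : Tm F → Tm F → Prop
  | refl (t : Tm F) : Subterm t t
  | app {s t : Tm F} (f : F) (ts : List (Tm F)) : t ∈ ts → Subterm s t → Subterm s (Tm.app f ts)

/-- `s` occurs as a (sub)term in `Π`. -/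
def OccursIn (s : Tm F) (P : Set (CClass F)) : Prop :=
  ∃ A ∈ P, ∃ ct ∈ A, Subterm s (CTerm.term ct) ∨ ∃ u ∈ CTerm.constr ct, Subterm s u

/-- `M` is `Π`-closed for the ground term `t`. -/
def PiClosed (M : Set (Tm F)) (P : Set (CClass F)) (t : Tm F) : Prop :=
  ∀ s, OccursIn s P → ∀ σ : Subst F, s.subst σ ∈ M →
    ∀ δ : Subst F, (∀ x, σ x ≠ δ x → δ x = t) → s.subst δ ∈ M

/-- Semantic equational consequence: every model of the (implicitly universally
quantified) equations is a model of `s ≈ t`. -/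
def Entails (Eqs : Set (Tm F × Tm F)) (s t : Tm F) : Prop :=
  ∀ (α : Type) (_ : Nonempty α) (I : F → List α → α) (v : ℕ → α),
    (∀ e ∈ Eqs, ∀ w : ℕ → α, Tm.eval I w e.1 = Tm.eval I w e.2) →
    Tm.eval I v s = Tm.eval I v t

/-- `gnd_M(E)`: ground instances of equations of `E` with all ground terms in `M`. -/
def gndM (M : Set (Tm F)) (E : Set (Tm F × Tm F)) : Set (Tm F × Tm F) :=
  { e | ∃ p ∈ E, ∃ σ : Subst F,
      e = (Tm.subst σ p.1, Tm.subst σ p.2) ∧ Tm.subst σ p.1 ∈ M ∧ Tm.subst σ p.2 ∈ M }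

def IsUnifier (μ : Subst F) (s t : Tm F) : Prop := s.subst μ = t.subst μ

def IsMGU (μ : Subst F) (s t : Tm F) : Prop :=
  IsUnifier μ s t ∧ ∀ τ : Subst F, IsUnifier τ s t → ∃ δ : Subst F, τ = Subst.comp μ δ

/-- Simultaneous most general unifier of the equations `s₁ = t₁` and `s₂ = t₂`. -/
def IsSimMGU (μ : Subst F) (s₁ t₁ s₂ t₂ : Tm F) : Prop :=
  IsUnifier μ s₁ t₁ ∧ IsUnifier μ s₂ t₂ ∧
  ∀ τ : Subst F, IsUnifier τ s₁ t₁ → IsUnifier τ s₂ t₂ → ∃ δ : Subst F, τ = Subst.comp μ δ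

/-- Conjoin a constraint to every constrained term of a class. -/
def addConstr (A : CClass F) (Γ : Set (Tm F)) : CClass F :=
  { ct' | ∃ ct ∈ A, ct' = ⟨CTerm.constr ct ∪ Γ, CTerm.term ct⟩ }

/-- The rules of the calculus CC(X). -/
inductive Step {F : Type} (M : Set (Tm F)) : Set (CClass F) → Set (CClass F) → Prop
  | merge (P : Set (CClass F)) (A B C' : CClass F) (ρA ρB μ : Subst F) (ct₁ ct₂ : CTerm F)
      (hA : A ∈ P) (hB : B ∈ P)
      (hρA : IsNormRenaming A ρA) (hρB : IsNormRenaming B ρB)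
      (h1 : ct₁ ∈ A) (h2 : ct₂ ∈ B)
      (hmgu : IsMGU μ ct₁.term ct₂.term)
      (hC' : C' = substClass (addConstr (normC A ρA) (ct₁.constr ∪ ct₂.constr) ∪
                               addConstr (normC B ρB) (ct₁.constr ∪ ct₂.constr)) μ)
      (hnsub : ∀ C ∈ P, ¬ Subsumes M C C') :
      Step M P (insert C' P)
  | deduction (P : Set (CClass F)) (A B C' : CClass F) (f : F)
      (ss ts ss' ts' : List (Tm F)) (Γ Δ : Set (Tm F)) (Γs Δs : List (Set (Tm F))) (μ : Subst F)
      (hA : A ∈ P) (hB : B ∈ P)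
      (h1 : (⟨Γ, Tm.app f ss⟩ : CTerm F) ∈ A)
      (h2 : (⟨Δ, Tm.app f ts⟩ : CTerm F) ∈ B)
      (hl1 : ss'.length = ss.length) (hl2 : ts'.length = ss.length)
      (hl3 : ts.length = ss.length) (hl4 : Γs.length = ss.length) (hl5 : Δs.length = ss.length)
      (hside : ∀ i < ss.length, ∃ D ∈ P, ∃ ρ : Subst F, IsNormRenaming D ρ ∧
          (⟨Γs[i]!, ss'[i]!⟩ : CTerm F) ∈ normC D ρ ∧ (⟨Δs[i]!, ts'[i]!⟩ : CTerm F) ∈ normC D ρ)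
      (hmgu : IsSimMGU μ (Tm.app f ss') (Tm.app f ss) (Tm.app f ts') (Tm.app f ts))
      (hC' : C' = substClass
          ({⟨Γ ∪ Δ ∪ ⋃₀ {G | G ∈ Γs} ∪ ⋃₀ {G | G ∈ Δs}, Tm.app f ss'⟩,
            ⟨Γ ∪ Δ ∪ ⋃₀ {G | G ∈ Γs} ∪ ⋃₀ {G | G ∈ Δs}, Tm.app f ts'⟩} : CClass F) μ)
      (hnsub : ∀ C ∈ P, ¬ Subsumes M C C') :
      Step M P (insert C' P)
  | subsump (P : Set (CClass F)) (A B : CClass F)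
      (hA : A ∈ P) (hB : B ∈ P) (hne : A ≠ B) (hsub : Subsumes M B A) :
      Step M P (P \ {A})

/-- The single-term class `{f(x₁,…,x_k) ∈ M ∥ f(x₁,…,x_k)}`. -/
def singleTermClass (ar : F → ℕ) (f : F) : CClass F :=
  {⟨{Tm.app f ((List.range (ar f)).map Tm.var)}, Tm.app f ((List.range (ar f)).map Tm.var)⟩}

/-- The initial state `Π₀` of CC(X) for the equations `E`. -/
def initState (ar : F → ℕ) (E : Set (Tm F × Tm F)) : Set (CClass F) :=
  { A | ∃ p ∈ E, A = ({⟨{p.1, p.2}, p.1⟩, ⟨{p.1, p.2}, p.2⟩} : CClass F) } ∪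
  { A | ∃ f : F, A = singleTermClass ar f }

/-- `B` subsumes `A` by matching. -/
def SubsumesByMatching (M : Set (Tm F)) (B A : CClass F) : Prop :=
  ∃ σ : Subst F, Subst.dom σ ⊆ sepVars B ∧ (∀ x ∈ sepVars B, (σ x).varsIn ⊆ varsAll A) ∧
    ∀ ct ∈ A, ∃ τ : Subst F, Subst.dom τ ⊆ freeVars B ∧
      (∀ y ∈ freeVars B, (τ y).varsIn ⊆ varsAll A) ∧
      ∃ ct' ∈ B, CTerm.term ct = ((CTerm.term ct').subst σ).subst τ ∧
        ∀ δ : Subst F, ConstrHolds M (CTerm.constr ct) δ →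
          ∃ δ' : Subst F,
            ConstrHolds M (substConstr (substConstr (substConstr (CTerm.constr ct') σ) τ) δ) δ'

/-- `M` determined by the symbol-count ordering and a bound `β`. -/
def Mle (β : Tm F) : Set (Tm F) := { t | t.Ground ∧ t.size ≤ β.size }

def varsFinset (t : Tm F) : Finset ℕ := t.varsList.toFinset

/-- Truth of the LIA abstraction `lic(t ⪯ β)` under an integer assignment `v`. -/
def licHolds (t β : Tm F) (v : ℕ → ℕ) : Prop :=
  (∀ x ∈ varsFinset t, 1 ≤ v x) ∧
  (∑ x ∈ varsFinset t, (t.count x : ℤ) * (v x : ℤ)) ≤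
    (β.size : ℤ) - ((t.size : ℤ) - ∑ x ∈ varsFinset t, (t.count x : ℤ))

/-! The free variables of `s` are replaced by `α` one at a time. Since a free variable `y` is not
separating, some term `t` of `A` does not contain it, so for a grounding `μ` making the common
constraint true the hypothesis on `A` gives `sμ ≈ tμ = t(μ[y ↦ α]) ≈ s(μ[y ↦ α])`; `Π`-closedness
of `M` keeps the constraint true under `μ[y ↦ α]`. -/

section GroundTesting

namespace Tm

@[elab_as_elim]
theorem induction {motive : Tm F → Prop} (var : ∀ x, motive (Tm.var x))
    (app : ∀ f ts, (∀ t ∈ ts, motive t) → motive (Tm.app f ts)) : ∀ t, motive t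
  | .var x => var x
  | .app f ts => app f ts fun t _ => induction var app t
  decreasing_by simp only [Tm.app.sizeOf_spec]; have := List.sizeOf_lt_of_mem ‹t ∈ ts›; omega

@[simp]
theorem subst_var (σ : Subst F) (x : ℕ) : (Tm.var x).subst σ = σ x := by
  rw [subst]

theorem subst_app (σ : Subst F) (f : F) (ts : List (Tm F)) :
    (Tm.app f ts).subst σ = Tm.app f (ts.map (·.subst σ)) := by
  rw [subst, List.attach_map_val]

theorem varsList_app (f : F) (ts : List (Tm F)) :
    (Tm.app f ts).varsList = (ts.map varsList).flatten := by
  rw [varsList, List.attach_map_val]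

theorem subst_congr {σ τ : Subst F} {t : Tm F} (h : ∀ x ∈ t.varsList, σ x = τ x) :
    t.subst σ = t.subst τ := by
  induction t using Tm.induction with
  | var x => simpa [varsList] using h
  | app f ts ih =>
    simp only [subst_app, varsList_app, List.mem_flatten, List.mem_map] at h ⊢
    exact congrArg _ <| List.map_congr_left fun t ht =>
      ih t ht fun x hx => h x ⟨_, ⟨t, ht, rfl⟩, hx⟩

theorem subst_id (t : Tm F) : t.subst Tm.var = t := by
  induction t using Tm.induction with
  | var x => exact subst_var _ _
  | app f ts ih => rw [subst_app, List.map_congr_left ih, List.map_id']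

theorem subst_comp (σ τ : Subst F) (t : Tm F) : (t.subst σ).subst τ = t.subst (σ.comp τ) := by
  induction t using Tm.induction with
  | var x => simp [Subst.comp]
  | app f ts ih => simp only [subst_app, List.map_map]; exact congrArg _ (List.map_congr_left ih)

theorem Ground.subst_eq {t : Tm F} (ht : t.Ground) (σ : Subst F) : t.subst σ = t := by
  refine (subst_congr fun x hx => ?_).trans (subst_id t)
  rw [show t.varsList = [] from ht] at hx
  cases hx

theorem Ground.subst {t : Tm F} (ht : t.Ground) (σ : Subst F) : (t.subst σ).Ground := by
  rw [ht.subst_eq]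
  exact ht

theorem ground_subst {σ : Subst F} {t : Tm F} (h : ∀ x ∈ t.varsList, (σ x).Ground) :
    (t.subst σ).Ground := by
  induction t using Tm.induction with
  | var x => simpa [varsList] using h
  | app f ts ih =>
    simp only [varsList_app, List.mem_flatten, List.mem_map] at h
    simp only [Ground, subst_app, varsList_app, List.map_map, List.flatten_eq_nil_iff,
      List.mem_map, Function.comp_apply]
    rintro _ ⟨t, ht, rfl⟩
    exact ih t ht fun x hx => h x ⟨_, ⟨t, ht, rfl⟩, hx⟩

end Tm

theorem Entails.refl (Eqs : Set (Tm F × Tm F)) (s : Tm F) : Entails Eqs s s :=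
  fun _ _ _ _ _ => rfl

theorem Entails.trans {Eqs : Set (Tm F × Tm F)} {s t u : Tm F}
    (h₁ : Entails Eqs s t) (h₂ : Entails Eqs t u) : Entails Eqs s u :=
  fun a ha I v hE => (h₁ a ha I v hE).trans (h₂ a ha I v hE)

theorem mem_sepVars_or_mem_freeVars {A : CClass F} {x : ℕ} (hx : x ∈ termVars A) :
    x ∈ sepVars A ∨ x ∈ freeVars A :=
  or_iff_not_imp_left.2 fun hsep => ⟨hx, hsep⟩

theorem occursIn_of_mem_constr {P : Set (CClass F)} {A : CClass F} (hA : A ∈ P) {ct : CTerm F}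
    (hct : ct ∈ A) {u : Tm F} (hu : u ∈ ct.constr) : OccursIn u P :=
  ⟨A, hA, ct, hct, .inr ⟨u, hu, .refl u⟩⟩

theorem PiClosed.subst_update_mem {M : Set (Tm F)} {P : Set (CClass F)} {t : Tm F}
    (hcl : PiClosed M P t) {s : Tm F} (hs : OccursIn s P) {μ : Subst F} (hμ : s.subst μ ∈ M)
    (y : ℕ) : s.subst (Function.update μ y t) ∈ M :=
  hcl s hs μ hμ _ fun x hx => by
    by_cases hxy : x = y
    · rw [hxy, Function.update_self]
    · exact absurd (Function.update_of_ne hxy t μ).symm hx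

theorem Subst.apply_eq_var_of_notMem_dom {σ : Subst F} {x : ℕ} (hx : x ∉ σ.dom) :
    σ x = Tm.var x :=
  not_not.1 hx

def IsTestGrounding (M : Set (Tm F)) (A : CClass F) (Γ₀ : Set (Tm F)) (μ : Subst F) : Prop :=
  (∀ x ∈ termVars A, (μ x).Ground) ∧ ConstrHolds M Γ₀ μ

variable {M : Set (Tm F)} {E : Set (Tm F × Tm F)} {P : Set (CClass F)} {α : Tm F}
  {A : CClass F} {Γ₀ : Set (Tm F)} {μ : Subst F}

theorem IsTestGrounding.entails (hMg : ∀ t ∈ M, t.Ground) (hconstr : ∀ ct ∈ A, ct.constr = Γ₀)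
    (hmod : ∀ σ : Subst F, GroundingForClass σ A →
        ∀ s ∈ applyClass M A σ, ∀ t ∈ applyClass M A σ, Entails (gndM M E) s t)
    (hμ : IsTestGrounding M A Γ₀ μ) {s t : CTerm F} (hs : s ∈ A) (ht : t ∈ A) :
    Entails (gndM M E) (s.term.subst μ) (t.term.subst μ) := by
  refine hmod μ (fun ct hct => ⟨?_, fun u hu => ?_⟩) _ ⟨s, hs, ?_, rfl⟩ _ ⟨t, ht, ?_, rfl⟩
  · exact Tm.ground_subst fun x hx => hμ.1 x (Set.mem_biUnion hct hx)
  · exact hMg _ (hμ.2 ⟨u, hconstr ct hct ▸ hu, rfl⟩)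
  · exact hconstr s hs ▸ hμ.2
  · exact hconstr t ht ▸ hμ.2

theorem IsTestGrounding.update (hMg : ∀ t ∈ M, t.Ground) (hαM : α ∈ M)
    (hcl : PiClosed M P α) (hAP : A ∈ P) {ct : CTerm F} (hct : ct ∈ A)
    (hconstr : ∀ ct ∈ A, ct.constr = Γ₀) (hμ : IsTestGrounding M A Γ₀ μ) (y : ℕ) :
    IsTestGrounding M A Γ₀ (Function.update μ y α) := by
  refine ⟨fun x hx => ?_, ?_⟩
  · by_cases hxy : x = y
    · rw [hxy, Function.update_self]; exact hMg α hαM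
    · rw [Function.update_of_ne hxy]; exact hμ.1 x hx
  · rintro _ ⟨u, hu, rfl⟩
    exact hcl.subst_update_mem (occursIn_of_mem_constr hAP hct (hconstr ct hct ▸ hu))
      (hμ.2 ⟨u, hu, rfl⟩) y

theorem entails_subst_update_of_mem_freeVars (hMg : ∀ t ∈ M, t.Ground)
    (hconstr : ∀ ct ∈ A, ct.constr = Γ₀)
    (hmod : ∀ σ : Subst F, GroundingForClass σ A →
        ∀ s ∈ applyClass M A σ, ∀ t ∈ applyClass M A σ, Entails (gndM M E) s t)
    {y : ℕ} {a : Tm F} (hμ : IsTestGrounding M A Γ₀ μ)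
    (hμ' : IsTestGrounding M A Γ₀ (Function.update μ y a)) (hy : y ∈ freeVars A)
    {ct : CTerm F} (hct : ct ∈ A) :
    Entails (gndM M E) (ct.term.subst μ) (ct.term.subst (Function.update μ y a)) := by
  obtain ⟨ct', hct', hyct'⟩ : ∃ ct' ∈ A, y ∉ ct'.term.varsIn := by
    simpa [sepVars] using hy.2
  have hfix : ct'.term.subst (Function.update μ y a) = ct'.term.subst μ :=
    Tm.subst_congr fun x hx => Function.update_of_ne (ne_of_mem_of_not_mem hx hyct') a μ
  refine (hμ.entails hMg hconstr hmod hct hct').trans ?_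
  rw [← hfix]
  exact hμ'.entails hMg hconstr hmod hct' hct

theorem entails_subst_piecewise (hMg : ∀ t ∈ M, t.Ground) (hαM : α ∈ M)
    (hcl : PiClosed M P α) (hAP : A ∈ P) (hconstr : ∀ ct ∈ A, ct.constr = Γ₀)
    (hmod : ∀ σ : Subst F, GroundingForClass σ A →
        ∀ s ∈ applyClass M A σ, ∀ t ∈ applyClass M A σ, Entails (gndM M E) s t)
    {ct : CTerm F} (hct : ct ∈ A) (hμ : IsTestGrounding M A Γ₀ μ)
    (S : Finset ℕ) (hS : ↑S ⊆ freeVars A) :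
    IsTestGrounding M A Γ₀ (S.piecewise (fun _ => α) μ) ∧
      Entails (gndM M E) (ct.term.subst μ) (ct.term.subst (S.piecewise (fun _ => α) μ)) := by
  induction S using Finset.induction_on with
  | empty => simpa using ⟨hμ, Entails.refl _ _⟩
  | insert y S _ ih =>
    rw [Finset.coe_insert, Set.insert_subset_iff] at hS
    obtain ⟨hμS, hent⟩ := ih hS.2
    have hμS' := hμS.update hMg hαM hcl hAP hct hconstr y
    rw [Finset.piecewise_insert]
    exact ⟨hμS', hent.trans
      (entails_subst_update_of_mem_freeVars hMg hconstr hmod hμS hμS' hS.1 hct)⟩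

theorem ground_comp_of_mem_termVars {σ δ : Subst F} (hσdom : σ.dom ⊆ sepVars A)
    (hσg : ∀ x ∈ sepVars A, (σ x).Ground) (hδg : ∀ x ∈ freeVars A, (δ x).Ground) {x : ℕ}
    (hx : x ∈ termVars A) : (σ.comp δ x).Ground := by
  rcases mem_sepVars_or_mem_freeVars hx with hsep | hfree
  · exact (hσg x hsep).subst δ
  · have hσx := Subst.apply_eq_var_of_notMem_dom fun h => hfree.2 (hσdom h)
    simpa [Subst.comp, hσx] using hδg x hfree

theorem isTestGrounding_comp {σ δ θ : Subst F} (hσdom : σ.dom ⊆ sepVars A)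
    (hσg : ∀ x ∈ sepVars A, (σ x).Ground) (hδg : ∀ x ∈ freeVars A, (δ x).Ground)
    (hconstr : ∀ ct ∈ A, ct.constr = Γ₀) {ct : CTerm F} (hct : ct ∈ A)
    (hθ : ConstrHolds M (substConstr (substConstr ct.constr σ) δ) θ) :
    IsTestGrounding M A Γ₀ ((σ.comp δ).comp θ) := by
  refine ⟨fun x hx => (ground_comp_of_mem_termVars hσdom hσg hδg hx).subst θ, ?_⟩
  rintro _ ⟨u, hu, rfl⟩
  show u.subst _ ∈ M
  rw [← Tm.subst_comp, ← Tm.subst_comp]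
  exact hθ ⟨_, ⟨u.subst σ, ⟨u, hconstr ct hct ▸ hu, rfl⟩, rfl⟩, rfl⟩

end GroundTesting

theorem ground_testing_general {F : Type}
    (M : Set (Tm F)) (hMg : ∀ t ∈ M, t.Ground)
    (E : Set (Tm F × Tm F))
    (P : Set (CClass F)) (α : Tm F) (hαM : α ∈ M) (hcl : PiClosed M P α)
    (A : CClass F) (hAP : A ∈ P)
    (Γ₀ : Set (Tm F)) (hconstr : ∀ ct ∈ A, CTerm.constr ct = Γ₀)
    (hmod : ∀ σ : Subst F, GroundingForClass σ A →
        ∀ s ∈ applyClass M A σ, ∀ t ∈ applyClass M A σ, Entails (gndM M E) s t) :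
    ∀ ct ∈ A, ∀ σ δ δ' : Subst F,
      Subst.dom σ ⊆ sepVars A → (∀ x ∈ sepVars A, (σ x).Ground) →
      Subst.dom δ ⊆ freeVars A → (∀ x ∈ freeVars A, (δ x).Ground) →
      (∀ y ∈ freeVars A, δ' y = α) → (∀ y, y ∉ freeVars A → δ' y = Tm.var y) →
      ConstrSat M (substConstr (substConstr (CTerm.constr ct) σ) δ) →
      Entails (gndM M E) (((CTerm.term ct).subst σ).subst δ)
        (((CTerm.term ct).subst σ).subst δ') := by
  classical
  intro ct hct σ δ δ' hσdom hσg _ hδg hδ'free _ ⟨θ, hθ⟩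
  have hμ₀ := isTestGrounding_comp hσdom hσg hδg hconstr hct hθ
  let S := (ct.term.varsList.filter (· ∈ freeVars A)).toFinset
  have hS : ↑S ⊆ freeVars A := fun x hx => by
    simp only [S, Finset.mem_coe, List.mem_toFinset, List.mem_filter, decide_eq_true_eq] at hx
    exact hx.2
  obtain ⟨-, hent⟩ := entails_subst_piecewise hMg hαM hcl hAP hconstr hmod hct hμ₀ S hS
  convert hent using 1 <;> rw [Tm.subst_comp] <;> refine Tm.subst_congr fun x hx => ?_
  · exact ((ground_comp_of_mem_termVars hσdom hσg hδg (Set.mem_biUnion hct hx)).subst_eq θ).symm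
  · rcases mem_sepVars_or_mem_freeVars (Set.mem_biUnion hct hx) with hsep | hfree
    · rw [Finset.piecewise_eq_of_notMem _ _ _ fun h => (hS h).2 hsep]
      simp only [Subst.comp, (hσg x hsep).subst_eq]
    · rw [Finset.piecewise_eq_of_mem _ _ _ (by simp [S, hx, hfree])]
      simp [Subst.comp, Subst.apply_eq_var_of_notMem_dom fun h => hfree.2 (hσdom h),
        hδ'free x hfree]

/-- Lemma: Ground Testing. -/
theorem ground_testing {F : Type} [Finite F] [Nonempty F]
    (M : Set (Tm F)) (hMfin : M.Finite) (hMg : ∀ t ∈ M, t.Ground)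
    (E : Set (Tm F × Tm F)) (hEfin : E.Finite)
    (P : Set (CClass F)) (α : Tm F) (hαM : α ∈ M) (hcl : PiClosed M P α)
    (A : CClass F) (hAP : A ∈ P) (hAfin : A.Finite)
    (Γ₀ : Set (Tm F)) (hconstr : ∀ ct ∈ A, CTerm.constr ct = Γ₀)
    (hmod : ∀ σ : Subst F, GroundingForClass σ A →
        ∀ s ∈ applyClass M A σ, ∀ t ∈ applyClass M A σ, Entails (gndM M E) s t) :
    ∀ ct ∈ A, ∀ σ δ δ' : Subst F,
      Subst.dom σ ⊆ sepVars A → (∀ x ∈ sepVars A, (σ x).Ground) →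
      Subst.dom δ ⊆ freeVars A → (∀ x ∈ freeVars A, (δ x).Ground) →
      (∀ y ∈ freeVars A, δ' y = α) → (∀ y, y ∉ freeVars A → δ' y = Tm.var y) →
      ConstrSat M (substConstr (substConstr (CTerm.constr ct) σ) δ) →
      Entails (gndM M E) (((CTerm.term ct).subst σ).subst δ)
        (((CTerm.term ct).subst σ).subst δ') :=
  ground_testing_general M hMg E P α hαM hcl A hAP Γ₀ hconstr hmod

end NGCC
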